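/- Let Ω ⊆ ℂⁿ be a domain and ζ₀ ∈ Ω. Suppose U is a real-valued pluriharmonic function on Ω such that |U|² admits a pluriharmonic majorant on Ω, and suppose F is analytic on Ω with Re F = U and Im F(ζ₀) = 0. Then |F|² admits a pluriharmonic majorant on Ω, and the least pluriharmonic majorants satisfy H_F(ζ₀) ≤ 2 H_U(ζ₀), i.e., ‖F‖_{2,ζ₀} ≤ √2 ‖U‖_{2,ζ₀}. -/

import Mathlib

open Complex Metric Set

/-- A real-valued function on an open set of `ℂⁿ` is pluriharmonic if it is locally
the real part of an analytic function. -/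
def PluriharmonicOn {n : ℕ} (u : (Fin n → ℂ) → ℝ) (s : Set (Fin n → ℂ)) : Prop :=
  ∀ z ∈ s, ∃ ε > 0, ball z ε ⊆ s ∧ ∃ F : (Fin n → ℂ) → ℂ,
    DifferentiableOn ℂ F (ball z ε) ∧ ∀ w ∈ ball z ε, (F w).re = u w

/-- `H` is a pluriharmonic majorant of `g` on `s`. -/
def PluriharmonicMajorantOn {n : ℕ} (g H : (Fin n → ℂ) → ℝ) (s : Set (Fin n → ℂ)) : Prop :=
  PluriharmonicOn H s ∧ ∀ z ∈ s, g z ≤ H z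

/-- `H` is the least pluriharmonic majorant of `g` on `s`. -/
def IsLeastPluriharmonicMajorantOn {n : ℕ} (g H : (Fin n → ℂ) → ℝ)
    (s : Set (Fin n → ℂ)) : Prop :=
  PluriharmonicMajorantOn g H s ∧
    ∀ H', PluriharmonicMajorantOn g H' s → ∀ z ∈ s, H z ≤ H' z

/-!
Since `‖F‖² = (Re F)² + (Im F)² = 2 (Re F)² - Re (F²)` and `Re (F²)` is pluriharmonic,
`2 H_U - Re (F²)` is a pluriharmonic majorant of `|F|²`. At `ζ₀` the function `F` is real,
so `Re (F(ζ₀)²) = U(ζ₀)² ≥ 0` and this majorant is at most `2 H_U(ζ₀)` there.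
-/

lemma Complex.sq_norm_eq_two_mul_re_sq_sub_re_sq (z : ℂ) :
    ‖z‖ ^ 2 = 2 * z.re ^ 2 - (z ^ 2).re := by
  rw [Complex.sq_norm, Complex.normSq_apply, sq z, Complex.mul_re]
  ring

lemma PluriharmonicOn.const_mul_sub_re {n : ℕ} {u : (Fin n → ℂ) → ℝ} {s : Set (Fin n → ℂ)}
    (hu : PluriharmonicOn u s) (c : ℝ) {G : (Fin n → ℂ) → ℂ} (hG : DifferentiableOn ℂ G s) :
    PluriharmonicOn (fun z => c * u z - (G z).re) s := by
  intro z hz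
  obtain ⟨ε, hε, hball, F, hF, hFre⟩ := hu z hz
  refine ⟨ε, hε, hball, fun w => c * F w - G w, (hF.const_mul _).sub (hG.mono hball), ?_⟩
  intro w hw
  simp [hFre w hw]

lemma PluriharmonicMajorantOn.two_mul_sub_re_sq {n : ℕ} {s : Set (Fin n → ℂ)}
    {U HU : (Fin n → ℂ) → ℝ} (hHU : PluriharmonicMajorantOn (fun ζ => ‖((U ζ : ℝ) : ℂ)‖ ^ 2) HU s)
    {F : (Fin n → ℂ) → ℂ} (hF : DifferentiableOn ℂ F s) (hFre : ∀ ζ ∈ s, (F ζ).re = U ζ) :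
    PluriharmonicMajorantOn (fun ζ => ‖F ζ‖ ^ 2) (fun ζ => 2 * HU ζ - (F ζ ^ 2).re) s := by
  refine ⟨hHU.1.const_mul_sub_re 2 (hF.pow 2), fun ζ hζ => ?_⟩
  have hUsq : U ζ ^ 2 ≤ HU ζ := by simpa [sq_abs] using hHU.2 ζ hζ
  dsimp only
  rw [Complex.sq_norm_eq_two_mul_re_sq_sub_re_sq, hFre ζ hζ]
  linarith

theorem riesz_lumer_cn_general {n : ℕ} (Ω : Set (Fin n → ℂ))
    (ζ₀ : Fin n → ℂ) (hζ₀ : ζ₀ ∈ Ω)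
    (U : (Fin n → ℂ) → ℝ)
    (HU : (Fin n → ℂ) → ℝ)
    (hHU : IsLeastPluriharmonicMajorantOn (fun ζ => ‖((U ζ : ℝ) : ℂ)‖ ^ 2) HU Ω)
    (F : (Fin n → ℂ) → ℂ) (hF : DifferentiableOn ℂ F Ω)
    (hFre : ∀ ζ ∈ Ω, (F ζ).re = U ζ) (hFim : (F ζ₀).im = 0) :
    (∃ H, PluriharmonicMajorantOn (fun ζ => ‖F ζ‖ ^ 2) H Ω) ∧
    ∀ HF, IsLeastPluriharmonicMajorantOn (fun ζ => ‖F ζ‖ ^ 2) HF Ω →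
      HF ζ₀ ≤ 2 * HU ζ₀ ∧
      Real.sqrt (HF ζ₀) ≤ Real.sqrt 2 * Real.sqrt (HU ζ₀) := by
  have hmaj := hHU.1.two_mul_sub_re_sq hF hFre
  refine ⟨⟨_, hmaj⟩, fun HF hHF => ?_⟩
  have hre_sq : (F ζ₀ ^ 2).re = U ζ₀ ^ 2 := by
    rw [sq, Complex.mul_re, hFre ζ₀ hζ₀, hFim]
    ring
  have hbound : HF ζ₀ ≤ 2 * HU ζ₀ :=
    calc HF ζ₀ ≤ 2 * HU ζ₀ - (F ζ₀ ^ 2).re := hHF.2 _ hmaj ζ₀ hζ₀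
      _ ≤ 2 * HU ζ₀ := by rw [hre_sq]; linarith [sq_nonneg (U ζ₀)]
  refine ⟨hbound, ?_⟩
  calc Real.sqrt (HF ζ₀) ≤ Real.sqrt (2 * HU ζ₀) := Real.sqrt_le_sqrt hbound
    _ = Real.sqrt 2 * Real.sqrt (HU ζ₀) := Real.sqrt_mul zero_le_two _

/-- Riesz's theorem for Lumer Hardy spaces on domains in `ℂⁿ`. -/
theorem riesz_lumer_cn {n : ℕ} (Ω : Set (Fin n → ℂ)) (hΩo : IsOpen Ω) (hΩc : IsConnected Ω)
    (ζ₀ : Fin n → ℂ) (hζ₀ : ζ₀ ∈ Ω)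
    (U : (Fin n → ℂ) → ℝ) (hU : PluriharmonicOn U Ω)
    (HU : (Fin n → ℂ) → ℝ)
    (hHU : IsLeastPluriharmonicMajorantOn (fun ζ => ‖((U ζ : ℝ) : ℂ)‖ ^ 2) HU Ω)
    (F : (Fin n → ℂ) → ℂ) (hF : DifferentiableOn ℂ F Ω)
    (hFre : ∀ ζ ∈ Ω, (F ζ).re = U ζ) (hFim : (F ζ₀).im = 0) :
    (∃ H, PluriharmonicMajorantOn (fun ζ => ‖F ζ‖ ^ 2) H Ω) ∧
    ∀ HF, IsLeastPluriharmonicMajorantOn (fun ζ => ‖F ζ‖ ^ 2) HF Ω →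
      HF ζ₀ ≤ 2 * HU ζ₀ ∧
      Real.sqrt (HF ζ₀) ≤ Real.sqrt 2 * Real.sqrt (HU ζ₀) :=
  riesz_lumer_cn_general Ω ζ₀ hζ₀ U HU hHU F hF hFre hFim
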